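/- arXiv:2410.15620 — 2 statements merged into one kernel-verified Lean document; each statement's English description precedes it below -/
import Mathlib

section
/- Let n ≥ 2 and let U : Finset (Fin n) → ℝ be a utility function. For each player i define the Shapley value s_i = Σ_{S ⊆ univ \ {i}} (|S|! · (n − 1 − |S|)!)/n! · (U(S ∪ {i}) − U(S)). Then for any two distinct players i ≠ j, s_i − s_j = Σ_{S ⊆ univ \ {i, j}} (U(S ∪ {i}) − U(S ∪ {j})) / ((n − 1) · C(n − 2, |S|)), where the sum runs over all subsets S of the players other than i and j, and C(n − 2, |S|) is the binomial coefficient. -/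
open Finset

lemma weight_sum (m k : ℕ) (hk : k ≤ m) :
    ((Nat.factorial k * Nat.factorial (m + 1 - k) : ℕ) : ℝ) / ((Nat.factorial (m+2) : ℕ) : ℝ)
    + ((Nat.factorial (k+1) * Nat.factorial (m - k) : ℕ) : ℝ) / ((Nat.factorial (m+2) : ℕ) : ℝ)
    = 1 / (((m + 1 : ℕ) : ℝ) * ((Nat.choose m k : ℕ) : ℝ)) := by
  obtain ⟨d, rfl⟩ := Nat.exists_eq_add_of_le hk
  have hs1 : k + d + 1 - k = d + 1 := by omega
  have hs2 : k + d - k = d := by omega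
  rw [hs1, hs2]
  have hc : ((k+d).choose k) * k.factorial * d.factorial = (k+d).factorial := by
    have := Nat.choose_mul_factorial_mul_factorial (Nat.le_add_right k d)
    simpa [hs2] using this
  have hcpos : 0 < (k+d).choose k := Nat.choose_pos (Nat.le_add_right k d)
  have hf : ∀ a : ℕ, (0:ℝ) < (a.factorial : ℝ) := fun a => by exact_mod_cast a.factorial_pos
  have hc' : (((k+d).choose k : ℕ) : ℝ) * k.factorial * d.factorial = (k+d).factorial := by
    exact_mod_cast hc
  have e1 : ((k+d+2).factorial : ℝ) = ((k:ℝ)+d+2) * ((k:ℝ)+d+1) * (k+d).factorial := by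
    rw [Nat.factorial_succ, Nat.factorial_succ]; push_cast; ring
  have e2 : ((d+1).factorial : ℝ) = ((d:ℝ)+1) * d.factorial := by
    rw [Nat.factorial_succ]; push_cast; ring
  have e3 : ((k+1).factorial : ℝ) = ((k:ℝ)+1) * k.factorial := by
    rw [Nat.factorial_succ]; push_cast; ring
  push_cast
  rw [e1, e2, e3]
  have hcp : (0:ℝ) < (((k+d).choose k : ℕ) : ℝ) := by exact_mod_cast hcpos
  field_simp
  nlinarith [hc', hf k, hf d, hf (k+d), hcp, mul_pos (hf k) (hf d)]

/-- The pairwise-difference identity for Shapley values underlying the group-testing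
estimator: for distinct players `i ≠ j`,
`s_i − s_j = Σ_{S ⊆ univ \ {i,j}} (U(S ∪ {i}) − U(S ∪ {j})) / ((n−1)·C(n−2, |S|))`. -/
theorem shapley_pairwise_difference
    {n : ℕ} (hn : 2 ≤ n) (U : Finset (Fin n) → ℝ)
    (s : Fin n → ℝ)
    (hs : ∀ i : Fin n, s i =
      ∑ S ∈ (Finset.univ.erase i).powerset,
        ((Nat.factorial S.card * Nat.factorial (n - 1 - S.card) : ℕ) : ℝ)
          / ((Nat.factorial n : ℕ) : ℝ) * (U (insert i S) - U S))
    (i j : Fin n) (hij : i ≠ j) :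
    s i - s j =
      ∑ S ∈ ((Finset.univ.erase i).erase j).powerset,
        (U (insert i S) - U (insert j S)) /
          (((n - 1 : ℕ) : ℝ) * ((Nat.choose (n - 2) S.card : ℕ) : ℝ)) := by
  obtain ⟨m, hm⟩ := Nat.exists_eq_add_of_le hn
  subst hm
  set A := (Finset.univ.erase i).erase j with hA
  have hjA : j ∉ A := Finset.notMem_erase j _
  have hiA : i ∉ A := fun h => (Finset.notMem_erase i Finset.univ) (Finset.mem_of_mem_erase h)
  have h1 : Finset.univ.erase i = insert j A :=
    (Finset.insert_erase (Finset.mem_erase.mpr ⟨hij.symm, Finset.mem_univ j⟩)).symm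
  have hAcomm : (Finset.univ.erase j).erase i = A := Finset.erase_right_comm
  have h2 : Finset.univ.erase j = insert i A := by
    rw [← hAcomm]
    exact (Finset.insert_erase (Finset.mem_erase.mpr ⟨hij, Finset.mem_univ i⟩)).symm
  have hAcard : A.card = m := by
    rw [hA, Finset.card_erase_of_mem (Finset.mem_erase.mpr ⟨hij.symm, Finset.mem_univ j⟩),
      Finset.card_erase_of_mem (Finset.mem_univ i), Finset.card_univ, Fintype.card_fin]
    omega
  rw [hs i, hs j, h1, h2, Finset.sum_powerset_insert hjA, Finset.sum_powerset_insert hiA,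
    ← Finset.sum_add_distrib, ← Finset.sum_add_distrib, ← Finset.sum_sub_distrib]
  apply Finset.sum_congr rfl
  intro S hS
  have hSA : S ⊆ A := Finset.mem_powerset.mp hS
  have hjS : j ∉ S := fun h => hjA (hSA h)
  have hiS : i ∉ S := fun h => hiA (hSA h)
  have hk : S.card ≤ m := le_trans (Finset.card_le_card hSA) (le_of_eq hAcard)
  have hcj : (insert j S).card = S.card + 1 := Finset.card_insert_of_notMem hjS
  have hci : (insert i S).card = S.card + 1 := Finset.card_insert_of_notMem hiS
  have e1 : 2 + m - 1 - S.card = m + 1 - S.card := by omega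
  have e2 : 2 + m - 1 - (S.card + 1) = m - S.card := by omega
  have e3 : 2 + m - 1 = m + 1 := by omega
  have e4 : 2 + m - 2 = m := by omega
  have e5 : (2 + m).factorial = (m + 2).factorial := by norm_num [Nat.add_comm]
  have hic : insert i (insert j S) = insert j (insert i S) := Finset.insert_comm i j S
  rw [hcj, hci, e1, e2, e3, e4, e5, hic]
  have key := weight_sum m S.card hk
  set wk := ((Nat.factorial S.card * Nat.factorial (m + 1 - S.card) : ℕ) : ℝ)
    / ((Nat.factorial (m+2) : ℕ) : ℝ) with hwk
  set wk1 := ((Nat.factorial (S.card+1) * Nat.factorial (m - S.card) : ℕ) : ℝ)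
    / ((Nat.factorial (m+2) : ℕ) : ℝ) with hwk1
  have : (U (insert i S) - U (insert j S)) /
      (((m + 1 : ℕ) : ℝ) * ((Nat.choose m S.card : ℕ) : ℝ))
      = (U (insert i S) - U (insert j S)) * (wk + wk1) := by
    rw [key]; ring
  rw [this]; ring
end

section
/- Let n ≥ 2, let U : Finset (Fin n) → ℝ be a utility function, let Z = 2·Σ_{k=1}^{n−1} 1/k and q_k = (1/Z)·(1/k + 1/(n−k)) for k = 1, ..., n−1, and for each player i define the Shapley value s_i = Σ_{S ⊆ univ \ {i}} (|S|! · (n − 1 − |S|)!)/n! · (U(S ∪ {i}) − U(S)). Then for any two distinct players i ≠ j, Z · Σ_{k=1}^{n−1} q_k · (1/C(n, k)) · Σ_{S ⊆ univ, |S| = k} U(S) · (1_{i ∈ S} − 1_{j ∈ S}) = s_i − s_j, where 1_{i ∈ S} is 1 if i ∈ S and 0 otherwise, and the inner sum runs over all size-k subsets of the n players. -/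
/-!
With `w m = m! (n-1-m)! / n!`, regrouping the Shapley sum of a player `p` by the coalition it
produces gives `s p = ∑_T c_p(T) U(T)`, where `c_p(T) = w(|T|-1)` if `p ∈ T` and `-w(|T|)`
otherwise. Hence `c_i(T) - c_j(T) = (w(|T|-1) + w(|T|)) (1_{i∈T} - 1_{j∈T})`, and the sampling
weights are exactly these coefficients: `Z q_k / C(n,k) = w(k-1) + w(k)`. The sizes `0` and `n`,
which are never sampled, contribute nothing because the two indicators agree on `∅` and on the
full set.
-/

open Finset

theorem sum_Icc_powersetCard_eq_sum_powerset {α M : Type*} [AddCommMonoid M] (s : Finset α)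
    {f : Finset α → M} (hempty : f ∅ = 0) (hs : f s = 0) :
    ∑ k ∈ Icc 1 (#s - 1), ∑ S ∈ powersetCard k s, f S = ∑ S ∈ s.powerset, f S := by
  rw [sum_powerset]
  refine sum_subset (fun k hk => by simp at hk ⊢; omega) fun k hk hk' => ?_
  obtain rfl | rfl : k = 0 ∨ k = #s := by simp at hk hk'; omega
  · simp [hempty]
  · simp [powersetCard_self, hs]

noncomputable def shapleyWeight (n m : ℕ) : ℝ :=
  ((Nat.factorial m * Nat.factorial (n - 1 - m) : ℕ) : ℝ) / ((Nat.factorial n : ℕ) : ℝ)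

theorem shapleyWeight_pred_add_shapleyWeight {n k : ℕ} (hk : 0 < k) (hkn : k < n) :
    shapleyWeight n (k - 1) + shapleyWeight n k =
      (1 / (k : ℝ) + 1 / ((n : ℝ) - k)) * (1 / ((n.choose k : ℕ) : ℝ)) := by
  obtain ⟨a, rfl⟩ : ∃ a, k = a + 1 := ⟨k - 1, by omega⟩
  obtain ⟨b, rfl⟩ : ∃ b, n = a + 1 + (b + 1) := ⟨n - (a + 2), by omega⟩
  have hfact := Nat.choose_mul_factorial_mul_factorial (Nat.le_add_right (a + 1) (b + 1))
  rw [Nat.add_sub_cancel_left] at hfact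
  have h₁ : a + 1 + (b + 1) - 1 - a = b + 1 := by omega
  have h₂ : a + 1 + (b + 1) - 1 - (a + 1) = b := by omega
  rw [shapleyWeight, shapleyWeight, Nat.add_sub_cancel, h₁, h₂, ← hfact]
  simp only [Nat.factorial_succ]
  push_cast
  field_simp
  ring

section

variable {α R : Type*} [DecidableEq α] [CommRing R]

def marginalCoeff (w : ℕ → R) (p : α) (T : Finset α) : R :=
  if p ∈ T then w (#T - 1) else -w #T

theorem sum_powerset_erase_mul_sub {s : Finset α} {p : α} (hp : p ∈ s) (w : ℕ → R)
    (U : Finset α → R) :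
    ∑ S ∈ (s.erase p).powerset, w #S * (U (insert p S) - U S) =
      ∑ T ∈ s.powerset, marginalCoeff w p T * U T := by
  have hpS : ∀ S ∈ (s.erase p).powerset, p ∉ S := fun S hS h =>
    notMem_erase p s (mem_powerset.1 hS h)
  rw [← insert_erase hp, sum_powerset_insert (notMem_erase p s), insert_erase hp,
    ← sum_add_distrib]
  refine sum_congr rfl fun S hS => ?_
  simp only [marginalCoeff, mem_insert_self, if_true, card_insert_of_notMem (hpS S hS),
    Nat.add_sub_cancel, hpS S hS, if_false]
  ring

theorem marginalCoeff_sub_marginalCoeff (w : ℕ → R) (i j : α) (T : Finset α) :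
    marginalCoeff w i T - marginalCoeff w j T =
      (w (#T - 1) + w #T) * ((if i ∈ T then 1 else 0) - (if j ∈ T then 1 else 0)) := by
  unfold marginalCoeff
  split_ifs <;> ring

end

theorem group_testing_estimator_unbiased_general
    {n : ℕ} (U : Finset (Fin n) → ℝ)
    (Z : ℝ) (q : ℕ → ℝ)
    (hZ : Z = 2 * ∑ k ∈ Finset.Icc 1 (n - 1), (1 : ℝ) / k)
    (hq : ∀ k ∈ Finset.Icc 1 (n - 1),
      q k = (1 / Z) * (1 / (k : ℝ) + 1 / ((n : ℝ) - k)))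
    (s : Fin n → ℝ)
    (hs : ∀ i : Fin n, s i =
      ∑ S ∈ (Finset.univ.erase i).powerset,
        ((Nat.factorial S.card * Nat.factorial (n - 1 - S.card) : ℕ) : ℝ)
          / ((Nat.factorial n : ℕ) : ℝ) * (U (insert i S) - U S))
    (i j : Fin n) :
    Z * ∑ k ∈ Finset.Icc 1 (n - 1),
      q k * (1 / ((Nat.choose n k : ℕ) : ℝ)) *
        ∑ S ∈ Finset.powersetCard k (Finset.univ : Finset (Fin n)),
          U S * ((if i ∈ S then (1 : ℝ) else 0) - (if j ∈ S then (1 : ℝ) else 0)) =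
    s i - s j := by
  set w := shapleyWeight n
  have hZq : ∀ k ∈ Icc 1 (n - 1),
      Z * q k * (1 / ((n.choose k : ℕ) : ℝ)) = w (k - 1) + w k := by
    intro k hk
    have hZ₀ : Z ≠ 0 := by
      rw [hZ]
      refine (mul_pos two_pos (sum_pos (fun m hm => ?_) ⟨k, hk⟩)).ne'
      exact one_div_pos.2 (Nat.cast_pos.2 (mem_Icc.1 hm).1)
    obtain ⟨hk₁, hkn⟩ := mem_Icc.1 hk
    rw [hq k hk, shapleyWeight_pred_add_shapleyWeight hk₁ (by omega)]
    field_simp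
  have hshapley : ∀ p, s p = ∑ T ∈ univ.powerset, marginalCoeff w p T * U T :=
    fun p => (hs p).trans (sum_powerset_erase_mul_sub (mem_univ p) w U)
  have hsizes := sum_Icc_powersetCard_eq_sum_powerset (univ : Finset (Fin n))
    (f := fun T => (w (#T - 1) + w #T) *
      (U T * ((if i ∈ T then (1 : ℝ) else 0) - (if j ∈ T then (1 : ℝ) else 0))))
    (by simp) (by simp)
  rw [card_fin] at hsizes
  rw [hshapley, hshapley, ← sum_sub_distrib, mul_sum]
  calc _ = ∑ k ∈ Icc 1 (n - 1), ∑ S ∈ powersetCard k univ, (w (#S - 1) + w #S) *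
          (U S * ((if i ∈ S then (1 : ℝ) else 0) - (if j ∈ S then (1 : ℝ) else 0))) := by
        refine sum_congr rfl fun k hk => ?_
        rw [← mul_assoc Z, ← mul_assoc Z, hZq k hk, mul_sum]
        exact sum_congr rfl fun S hS => by rw [(mem_powersetCard.1 hS).2]
    _ = _ := hsizes.trans <| sum_congr rfl fun T _ => by
        rw [← sub_mul, marginalCoeff_sub_marginalCoeff]
        ring

/-- The unbiasedness identity behind the group-testing estimator of Algorithm 3:
with sampling weights `q_k = (1/Z)(1/k + 1/(n−k))`, `Z = 2·Σ_{k=1}^{n−1} 1/k`,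
the expectation `Z · Σ_{k=1}^{n−1} q_k · (1/C(n,k)) · Σ_{|S|=k} U(S)·(1_{i∈S} − 1_{j∈S})`
equals the Shapley value difference `s_i − s_j` for any two distinct players `i ≠ j`. -/
theorem group_testing_estimator_unbiased
    {n : ℕ} (hn : 2 ≤ n) (U : Finset (Fin n) → ℝ)
    (Z : ℝ) (q : ℕ → ℝ)
    (hZ : Z = 2 * ∑ k ∈ Finset.Icc 1 (n - 1), (1 : ℝ) / k)
    (hq : ∀ k ∈ Finset.Icc 1 (n - 1),
      q k = (1 / Z) * (1 / (k : ℝ) + 1 / ((n : ℝ) - k)))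
    (s : Fin n → ℝ)
    (hs : ∀ i : Fin n, s i =
      ∑ S ∈ (Finset.univ.erase i).powerset,
        ((Nat.factorial S.card * Nat.factorial (n - 1 - S.card) : ℕ) : ℝ)
          / ((Nat.factorial n : ℕ) : ℝ) * (U (insert i S) - U S))
    (i j : Fin n) (hij : i ≠ j) :
    Z * ∑ k ∈ Finset.Icc 1 (n - 1),
      q k * (1 / ((Nat.choose n k : ℕ) : ℝ)) *
        ∑ S ∈ Finset.powersetCard k (Finset.univ : Finset (Fin n)),
          U S * ((if i ∈ S then (1 : ℝ) else 0) - (if j ∈ S then (1 : ℝ) else 0)) =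
    s i - s j :=
  group_testing_estimator_unbiased_general U Z q hZ hq s hs i j
end
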